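/- arXiv:2512.18561 — 2 statements merged into one kernel-verified Lean document; each statement's English description precedes it below -/
import Mathlib

section
/- Let g : ℝ → ℝ be continuous, strictly monotone increasing, and bounded (|g(h)| ≤ B for all h, for some B > 0), with a root h* (g(h*) = 0). Let (η_t)_{t≥1} be a sequence of positive reals with η_t → 0 and ∑_{t≥1} η_t = ∞. Then for any initial value h₁ ∈ ℝ, the recursion h_{t+1} = h_t − η_t · g(h_t) converges to h* as t → ∞. -/
open Filter

/-- **Deterministic Robbins–Monro convergence.**
Let `g : ℝ → ℝ` be continuous, strictly monotone increasing, and bounded by `B`, with a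
root `g hstar = 0`.  Let `(η t)_{t ≥ 1}` be positive gains with `η t → 0` and
`∑ η t = ∞`.  Then for any initial value `h₁`, the recursion
`h (t+1) = h t - η t * g (h t)` converges to `hstar`. -/
theorem robbins_monro_deterministic
    (g : ℝ → ℝ) (hgcont : Continuous g) (hgmono : StrictMono g)
    (B : ℝ) (hB : 0 < B) (hgbdd : ∀ x : ℝ, |g x| ≤ B)
    (hstar : ℝ) (hroot : g hstar = 0)
    (η : ℕ → ℝ) (hηpos : ∀ t, 1 ≤ t → 0 < η t)
    (hηzero : Tendsto η atTop (nhds 0))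
    (hηdiv : Tendsto (fun n : ℕ => ∑ t ∈ Finset.Icc 1 n, η t) atTop atTop)
    (h₁ : ℝ) (h : ℕ → ℝ) (hinit : h 1 = h₁)
    (hrec : ∀ t : ℕ, 1 ≤ t → h (t + 1) = h t - η t * g (h t)) :
    Tendsto h atTop (nhds hstar) := by
  have key : ∀ ε : ℝ, 0 < ε → ∃ N : ℕ, ∀ t, N ≤ t → |h t - hstar| ≤ 2 * ε := by
    intro ε hε
    have hgr : 0 < g (hstar + ε) := by
      have h1 : g hstar < g (hstar + ε) := hgmono (by linarith)
      rw [hroot] at h1; exact h1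
    have hgl : g (hstar - ε) < 0 := by
      have h1 : g (hstar - ε) < g hstar := hgmono (by linarith)
      rw [hroot] at h1; exact h1
    set δ : ℝ := min (g (hstar + ε)) (-(g (hstar - ε))) with hδdef
    have hδpos : 0 < δ := lt_min hgr (by linarith)
    obtain ⟨T₀, hT₀⟩ := Metric.tendsto_atTop.mp hηzero (ε / B) (by positivity)
    set T₁ : ℕ := max T₀ 1 with hT₁def
    have hT₁1 : 1 ≤ T₁ := le_max_right _ _
    have hηB : ∀ t, T₁ ≤ t → η t * B ≤ ε := by
      intro t ht
      have h1 := hT₀ t (le_trans (le_max_left _ _) ht)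
      rw [Real.dist_eq, sub_zero] at h1
      have h2 : η t < ε / B := lt_of_le_of_lt (le_abs_self _) h1
      have := (lt_div_iff₀ hB).mp h2
      linarith
    have hη0 : ∀ t, T₁ ≤ t → 0 ≤ η t := fun t ht => (hηpos t (le_trans hT₁1 ht)).le
    -- step bound
    have hstep : ∀ t, T₁ ≤ t → |h (t + 1) - h t| ≤ ε := by
      intro t ht
      rw [hrec t (le_trans hT₁1 ht)]
      have he : h t - η t * g (h t) - h t = -(η t * g (h t)) := by ring
      rw [he, abs_neg, abs_mul, abs_of_nonneg (hη0 t ht)]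
      calc η t * |g (h t)| ≤ η t * B :=
            mul_le_mul_of_nonneg_left (hgbdd _) (hη0 t ht)
        _ ≤ ε := hηB t ht
    -- g lower/upper bounds away from the band
    have hglow : ∀ x, hstar + ε < x → δ ≤ g x := by
      intro x hx
      exact le_trans (min_le_left _ _) (hgmono hx).le
    have hghigh : ∀ x, x < hstar - ε → g x ≤ -δ := by
      intro x hx
      have : g x ≤ g (hstar - ε) := (hgmono hx).le
      have h2 : δ ≤ -(g (hstar - ε)) := min_le_right _ _
      linarith
    -- tail sums diverge
    have sumdiv : Tendsto (fun m => ∑ t ∈ Finset.Icc T₁ m, η t) atTop atTop := by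
      have hsplit : ∀ m, T₁ ≤ m →
          (∑ t ∈ Finset.Icc 1 (T₁ - 1), η t) + ∑ t ∈ Finset.Icc T₁ m, η t
            = ∑ t ∈ Finset.Icc 1 m, η t := by
        intro m hm
        have e1 : Finset.Icc 1 (T₁ - 1) = Finset.Ioc 0 (T₁ - 1) := by
          ext x; simp only [Finset.mem_Icc, Finset.mem_Ioc]; omega
        have e2 : Finset.Icc T₁ m = Finset.Ioc (T₁ - 1) m := by
          ext x; simp only [Finset.mem_Icc, Finset.mem_Ioc]; omega
        have e3 : Finset.Icc 1 m = Finset.Ioc 0 m := by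
          ext x; simp only [Finset.mem_Icc, Finset.mem_Ioc]; omega
        rw [e1, e2, e3]
        exact Finset.sum_Ioc_consecutive _ (Nat.zero_le _)
          (le_trans (Nat.sub_le _ _) hm)
      have h1 : Tendsto (fun m => (∑ t ∈ Finset.Icc 1 m, η t)
          + -∑ t ∈ Finset.Icc 1 (T₁ - 1), η t) atTop atTop :=
        tendsto_atTop_add_const_right _ _ hηdiv
      refine h1.congr' ?_
      filter_upwards [eventually_ge_atTop T₁] with m hm
      have := hsplit m hm
      linarith
    -- accumulation bounds while staying outside the band
    have above : ∀ m, T₁ ≤ m → (∀ t, T₁ ≤ t → hstar + ε < h t) →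
        h (m + 1) ≤ h T₁ - δ * ∑ t ∈ Finset.Icc T₁ m, η t := by
      intro m hm hinv
      induction m, hm using Nat.le_induction with
      | base =>
        rw [hrec T₁ hT₁1, Finset.Icc_self, Finset.sum_singleton]
        have h1 : δ ≤ g (h T₁) := hglow _ (hinv T₁ le_rfl)
        have h2 : η T₁ * δ ≤ η T₁ * g (h T₁) :=
          mul_le_mul_of_nonneg_left h1 (hη0 T₁ le_rfl)
        linarith [h2]
      | succ n hn ih =>
        have hrec' := hrec (n + 1) (le_trans hT₁1 (le_trans hn (Nat.le_succ n)))
        have h1 : δ ≤ g (h (n + 1)) := hglow _ (hinv (n + 1) (le_trans hn (Nat.le_succ n)))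
        have h2 : η (n + 1) * δ ≤ η (n + 1) * g (h (n + 1)) :=
          mul_le_mul_of_nonneg_left h1 (hη0 (n + 1) (le_trans hn (Nat.le_succ n)))
        rw [Finset.sum_Icc_succ_top (le_trans hn (Nat.le_succ n))]
        rw [hrec']
        nlinarith [ih]
    have below : ∀ m, T₁ ≤ m → (∀ t, T₁ ≤ t → h t < hstar - ε) →
        h T₁ + δ * ∑ t ∈ Finset.Icc T₁ m, η t ≤ h (m + 1) := by
      intro m hm hinv
      induction m, hm using Nat.le_induction with
      | base =>
        rw [hrec T₁ hT₁1, Finset.Icc_self, Finset.sum_singleton]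
        have h1 : g (h T₁) ≤ -δ := hghigh _ (hinv T₁ le_rfl)
        have h2 : η T₁ * g (h T₁) ≤ η T₁ * (-δ) :=
          mul_le_mul_of_nonneg_left h1 (hη0 T₁ le_rfl)
        linarith [h2]
      | succ n hn ih =>
        have hrec' := hrec (n + 1) (le_trans hT₁1 (le_trans hn (Nat.le_succ n)))
        have h1 : g (h (n + 1)) ≤ -δ := hghigh _ (hinv (n + 1) (le_trans hn (Nat.le_succ n)))
        have h2 : η (n + 1) * g (h (n + 1)) ≤ η (n + 1) * (-δ) :=
          mul_le_mul_of_nonneg_left h1 (hη0 (n + 1) (le_trans hn (Nat.le_succ n)))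
        rw [Finset.sum_Icc_succ_top (le_trans hn (Nat.le_succ n))]
        rw [hrec']
        nlinarith [ih]
    -- Claim A: the iterate enters the ε-band at some time ≥ T₁
    have claimA : ∃ t₀, T₁ ≤ t₀ ∧ |h t₀ - hstar| ≤ ε := by
      by_contra hcon
      push_neg at hcon
      have hbig : ∀ t, T₁ ≤ t → ε < |h t - hstar| := hcon
      rcases lt_or_ge hstar (h T₁) with hside | hside
      · -- always above
        have habove : ∀ t, T₁ ≤ t → hstar + ε < h t := by
          intro t ht
          induction t, ht using Nat.le_induction with
          | base =>
            have h1 := hbig T₁ le_rfl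
            have h3 : |h T₁ - hstar| = h T₁ - hstar := abs_of_pos (by linarith)
            rw [h3] at h1; linarith
          | succ n hn ih =>
            have hs := hstep n hn
            have h1 : h n - ε ≤ h (n + 1) := by
              have := abs_le.mp (hs)
              have h2 := neg_le_of_abs_le hs
              linarith [abs_le.mp hs]
            have h2 : hstar < h (n + 1) := by linarith
            have h3 := hbig (n + 1) (le_trans hn (Nat.le_succ n))
            have h4 : |h (n + 1) - hstar| = h (n + 1) - hstar := abs_of_pos (by linarith)
            rw [h4] at h3; linarith
        -- divergence contradiction
        obtain ⟨m, hm1, hm2⟩ :=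
          ((sumdiv.eventually_gt_atTop ((h T₁ - hstar) / δ)).and
            (eventually_ge_atTop T₁)).exists
        have h1 := above m hm2 habove
        have h2 : h T₁ - hstar < (∑ t ∈ Finset.Icc T₁ m, η t) * δ :=
          (div_lt_iff₀ hδpos).mp hm1
        have h3 := habove (m + 1) (le_trans hm2 (Nat.le_succ m))
        nlinarith
      · -- always below (note |h T₁ - hstar| > ε and h T₁ ≤ hstar)
        have hbelow : ∀ t, T₁ ≤ t → h t < hstar - ε := by
          intro t ht
          induction t, ht using Nat.le_induction with
          | base =>
            have h1 := hbig T₁ le_rfl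
            have h3 : |h T₁ - hstar| = -(h T₁ - hstar) := by
              rw [abs_of_nonpos (by linarith)]
            rw [h3] at h1; linarith
          | succ n hn ih =>
            have hs := hstep n hn
            have h1 : h (n + 1) ≤ h n + ε := by linarith [abs_le.mp hs]
            have h2 : h (n + 1) < hstar := by linarith
            have h3 := hbig (n + 1) (le_trans hn (Nat.le_succ n))
            have h4 : |h (n + 1) - hstar| = -(h (n + 1) - hstar) :=
              abs_of_neg (by linarith)
            rw [h4] at h3; linarith
        obtain ⟨m, hm1, hm2⟩ :=
          ((sumdiv.eventually_gt_atTop ((hstar - h T₁) / δ)).and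
            (eventually_ge_atTop T₁)).exists
        have h1 := below m hm2 hbelow
        have h2 : hstar - h T₁ < (∑ t ∈ Finset.Icc T₁ m, η t) * δ :=
          (div_lt_iff₀ hδpos).mp hm1
        have h3 := hbelow (m + 1) (le_trans hm2 (Nat.le_succ m))
        nlinarith
    -- Claim B: after entering the ε-band, stay in the 2ε-band
    obtain ⟨t₀, ht₀T, ht₀band⟩ := claimA
    refine ⟨t₀, fun t ht => ?_⟩
    induction t, ht using Nat.le_induction with
    | base => linarith
    | succ n hn ih =>
      have hnT : T₁ ≤ n := le_trans ht₀T hn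
      have hs := hstep n hnT
      rcases le_or_gt (|h n - hstar|) ε with hcase | hcase
      · -- within ε: step of size ≤ ε keeps within 2ε
        have h1 := abs_le.mp hs
        have h2 := abs_le.mp hcase
        rw [abs_le]; constructor <;> linarith
      · rcases lt_or_ge hstar (h n) with hpos | hneg
        · -- above: h n ∈ (hstar + ε, hstar + 2ε], moves down but not past hstar
          have hx : ε < h n - hstar := by
            have := abs_of_pos (by linarith : (0:ℝ) < h n - hstar)
            rw [this] at hcase; exact hcase
          have hgpos : 0 < g (h n) := by
            have h1 : g hstar < g (h n) := hgmono hpos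
            rw [hroot] at h1; exact h1
          have hηg : 0 ≤ η n * g (h n) :=
            mul_nonneg (hη0 n hnT) hgpos.le
          have hdown : h (n + 1) ≤ h n := by
            rw [hrec n (le_trans hT₁1 hnT)]; linarith
          have hup : h n - ε ≤ h (n + 1) := by linarith [abs_le.mp hs]
          have h2 := abs_le.mp ih
          rw [abs_le]; constructor <;> linarith
        · -- below: symmetric
          have hx : ε < hstar - h n := by
            have h0 : h n - hstar ≤ 0 := by linarith
            have := abs_of_nonpos h0
            rw [this] at hcase; linarith
          have hgneg : g (h n) < 0 := by
            have h1 : g (h n) < g hstar := hgmono (by linarith)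
            rw [hroot] at h1; exact h1
          have hηg : η n * g (h n) ≤ 0 :=
            mul_nonpos_of_nonneg_of_nonpos (hη0 n hnT) hgneg.le
          have hupd : h n ≤ h (n + 1) := by
            rw [hrec n (le_trans hT₁1 hnT)]; linarith
          have hdn : h (n + 1) ≤ h n + ε := by linarith [abs_le.mp hs]
          have h2 := abs_le.mp ih
          rw [abs_le]; constructor <;> linarith
  rw [Metric.tendsto_atTop]
  intro ε hε
  obtain ⟨N, hN⟩ := key (ε / 3) (by positivity)
  refine ⟨N, fun n hn => ?_⟩
  rw [Real.dist_eq]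
  have := hN n hn
  linarith
end

section
/- Let K ≥ 2 and T ≥ 1 be natural numbers, let z_1, …, z_T : Fin K → [0,1] be loss vectors, and set η := √(ln K / T). Define the exponential-weights distributions w_t on Fin K by w_1(i) = 1/K and w_{t+1}(i) = w_t(i)·exp(−η·z_t(i)) / ∑_{j} w_t(j)·exp(−η·z_t(j)). Then the regret satisfies ∑_{t=1}^T ∑_{i} w_t(i)·z_t(i) − min_{i} ∑_{t=1}^T z_t(i) ≤ 2·√(T·ln K). -/
lemma exp_neg_le_quad (u : ℝ) (hu : 0 ≤ u) : Real.exp (-u) ≤ 1 - u + u ^ 2 := by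
  have h1 : u + 1 ≤ Real.exp u := Real.add_one_le_exp u
  have h2 : Real.exp (-u) * Real.exp u = 1 := by rw [← Real.exp_add]; simp
  nlinarith [Real.exp_pos u, Real.exp_pos (-u), sq_nonneg u, sq_nonneg (u - 1)]

/-- **Exponential-weights (Hedge) regret bound.**
With `K ≥ 2` experts, horizon `T ≥ 1`, loss vectors `z t : Fin K → [0,1]` for
`t = 1, …, T`, learning rate `η = √(ln K / T)`, and the exponential-weights
distributions `w 1 i = 1/K`,
`w (t+1) i = w t i * exp (-η * z t i) / ∑ j, w t j * exp (-η * z t j)`,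
the regret satisfies
`∑_{t=1}^T ∑_i w t i * z t i - min_i ∑_{t=1}^T z t i ≤ 2 √(T ln K)`. -/
theorem exponential_weights_regret
    (K T : ℕ) (hK : 2 ≤ K) (hT : 1 ≤ T)
    (z : ℕ → Fin K → ℝ)
    (hz : ∀ t ∈ Finset.Icc 1 T, ∀ i : Fin K, z t i ∈ Set.Icc (0 : ℝ) 1)
    (η : ℝ) (hη : η = Real.sqrt (Real.log K / T))
    (w : ℕ → Fin K → ℝ)
    (hw1 : ∀ i : Fin K, w 1 i = 1 / K)
    (hwrec : ∀ t : ℕ, 1 ≤ t → ∀ i : Fin K,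
      w (t + 1) i = w t i * Real.exp (-η * z t i) / ∑ j, w t j * Real.exp (-η * z t j)) :
    (∑ t ∈ Finset.Icc 1 T, ∑ i, w t i * z t i)
      - (Finset.univ.inf' (Finset.univ_nonempty_iff.mpr ⟨⟨0, by omega⟩⟩)
          fun i : Fin K => ∑ t ∈ Finset.Icc 1 T, z t i)
      ≤ 2 * Real.sqrt ((T : ℝ) * Real.log K) := by
  have hKpos : (0 : ℝ) < K := by positivity
  have hK1 : (1 : ℝ) < K := by exact_mod_cast (by omega : 1 < K)
  have hlogK : 0 < Real.log K := Real.log_pos hK1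
  have hTpos : (0 : ℝ) < T := by exact_mod_cast hT
  have hηpos : 0 < η := by
    rw [hη]; exact Real.sqrt_pos.mpr (by positivity)
  set S : ℕ → ℝ := fun t => ∑ j, w t j * Real.exp (-η * z t j) with hS
  have hne : (Finset.univ : Finset (Fin K)).Nonempty :=
    Finset.univ_nonempty_iff.mpr ⟨⟨0, by omega⟩⟩
  -- positivity of weights
  have hpos : ∀ t, 1 ≤ t → ∀ i, 0 < w t i := by
    intro t
    induction t with
    | zero => omega
    | succ n ih =>
      intro _ i
      rcases Nat.eq_zero_or_pos n with hn | hn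
      · subst hn; rw [hw1 i]; positivity
      · rw [hwrec n hn i]
        apply div_pos (mul_pos (ih hn i) (Real.exp_pos _))
        exact Finset.sum_pos (fun j _ => mul_pos (ih hn j) (Real.exp_pos _)) hne
  have hSpos : ∀ t, 1 ≤ t → 0 < S t := fun t ht =>
    Finset.sum_pos (fun j _ => mul_pos (hpos t ht j) (Real.exp_pos _)) hne
  -- weights sum to one
  have hsum : ∀ t, 1 ≤ t → ∑ i, w t i = 1 := by
    intro t
    induction t with
    | zero => omega
    | succ n ih =>
      intro _
      rcases Nat.eq_zero_or_pos n with hn | hn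
      · subst hn
        simp only [hw1]
        rw [Finset.sum_const, Finset.card_univ, Fintype.card_fin, nsmul_eq_mul]
        field_simp
      · have : ∑ i, w (n + 1) i = (∑ i, w n i * Real.exp (-η * z n i)) / S n := by
          rw [Finset.sum_div]
          exact Finset.sum_congr rfl fun i _ => hwrec n hn i
        rw [this]
        exact div_self (ne_of_gt (hSpos n hn))
  -- closed form: weight times product of normalizers
  have hclosed : ∀ t, ∀ i, w (t + 1) i * ∏ s ∈ Finset.Icc 1 t, S s
      = (1 / K) * Real.exp (-η * ∑ s ∈ Finset.Icc 1 t, z s i) := by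
    intro t
    induction t with
    | zero => intro i; simp [hw1 i]
    | succ n ih =>
      intro i
      rw [Finset.prod_Icc_succ_top (by omega : 1 ≤ n + 1),
        Finset.sum_Icc_succ_top (by omega : 1 ≤ n + 1),
        hwrec (n + 1) (by omega) i]
      have hSne : S (n + 1) ≠ 0 := ne_of_gt (hSpos (n + 1) (by omega))
      have : w (n + 1) i * Real.exp (-η * z (n + 1) i) / S (n + 1)
          * (((∏ s ∈ Finset.Icc 1 n, S s)) * S (n + 1))
          = (w (n + 1) i * ∏ s ∈ Finset.Icc 1 n, S s) * Real.exp (-η * z (n + 1) i) := by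
        field_simp
      rw [this, ih i, mul_assoc, ← Real.exp_add]
      ring_nf
  -- one-step bound on the normalizer
  have hSle : ∀ t ∈ Finset.Icc 1 T, S t ≤ Real.exp (η ^ 2 - η * ∑ i, w t i * z t i) := by
    intro t ht
    have ht1 : 1 ≤ t := (Finset.mem_Icc.mp ht).1
    have step1 : S t ≤ ∑ i, w t i * (1 - η * z t i + η ^ 2) := by
      apply Finset.sum_le_sum
      intro i _
      have hzi := hz t ht i
      apply mul_le_mul_of_nonneg_left _ (le_of_lt (hpos t ht1 i))
      have hu : 0 ≤ η * z t i := mul_nonneg hηpos.le hzi.1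
      calc Real.exp (-η * z t i) = Real.exp (-(η * z t i)) := by ring_nf
        _ ≤ 1 - η * z t i + (η * z t i) ^ 2 := exp_neg_le_quad _ hu
        _ ≤ 1 - η * z t i + η ^ 2 := by
            have hz2 : z t i ^ 2 ≤ 1 := by nlinarith [hzi.1, hzi.2]
            have he : (η * z t i) ^ 2 = η ^ 2 * z t i ^ 2 := by ring
            nlinarith [sq_nonneg η]
    have step2 : ∑ i, w t i * (1 - η * z t i + η ^ 2)
        = 1 + (η ^ 2 - η * ∑ i, w t i * z t i) := by
      have h1 := hsum t ht1
      have hc : ∀ i ∈ Finset.univ, w t i * (1 - η * z t i + η ^ 2)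
          = w t i * (1 + η ^ 2) - η * (w t i * z t i) := fun i _ => by ring
      rw [Finset.sum_congr rfl hc, Finset.sum_sub_distrib, ← Finset.sum_mul,
        ← Finset.mul_sum, h1]
      ring
    calc S t ≤ 1 + (η ^ 2 - η * ∑ i, w t i * z t i) := by rw [← step2]; exact step1
      _ ≤ Real.exp (η ^ 2 - η * ∑ i, w t i * z t i) := by
          have := Real.add_one_le_exp (η ^ 2 - η * ∑ i, w t i * z t i)
          linarith
  set R : ℝ := ∑ t ∈ Finset.Icc 1 T, ∑ i, w t i * z t i with hR
  have hprod : ∏ t ∈ Finset.Icc 1 T, S t ≤ Real.exp ((T : ℝ) * η ^ 2 - η * R) := by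
    calc ∏ t ∈ Finset.Icc 1 T, S t
        ≤ ∏ t ∈ Finset.Icc 1 T, Real.exp (η ^ 2 - η * ∑ i, w t i * z t i) := by
          apply Finset.prod_le_prod
          · intro t ht; exact le_of_lt (hSpos t (Finset.mem_Icc.mp ht).1)
          · exact hSle
      _ = Real.exp (∑ t ∈ Finset.Icc 1 T, (η ^ 2 - η * ∑ i, w t i * z t i)) := by
          rw [Real.exp_sum]
      _ = Real.exp ((T : ℝ) * η ^ 2 - η * R) := by
          congr 1
          rw [Finset.sum_sub_distrib, Finset.sum_const, Nat.card_Icc, hR, Finset.mul_sum,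
            Nat.add_sub_cancel, nsmul_eq_mul]
  -- pick the best expert
  obtain ⟨i0, _, hi0⟩ := Finset.exists_mem_eq_inf' hne
    (fun i : Fin K => ∑ t ∈ Finset.Icc 1 T, z t i)
  set L : ℝ := ∑ t ∈ Finset.Icc 1 T, z t i0 with hL
  have hwle : w (T + 1) i0 ≤ 1 := by
    rw [← hsum (T + 1) (by omega)]
    exact Finset.single_le_sum (fun j _ => le_of_lt (hpos (T + 1) (by omega) j))
      (Finset.mem_univ i0)
  have hkey : (1 / (K : ℝ)) * Real.exp (-η * L) ≤ Real.exp ((T : ℝ) * η ^ 2 - η * R) := by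
    calc (1 / (K : ℝ)) * Real.exp (-η * L)
        = w (T + 1) i0 * ∏ s ∈ Finset.Icc 1 T, S s := (hclosed T i0).symm
      _ ≤ 1 * ∏ s ∈ Finset.Icc 1 T, S s := by
          apply mul_le_mul_of_nonneg_right hwle
          exact Finset.prod_nonneg fun t ht => le_of_lt (hSpos t (Finset.mem_Icc.mp ht).1)
      _ = ∏ s ∈ Finset.Icc 1 T, S s := one_mul _
      _ ≤ Real.exp ((T : ℝ) * η ^ 2 - η * R) := hprod
  have hkey2 : -η * L - Real.log K ≤ (T : ℝ) * η ^ 2 - η * R := by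
    have : Real.exp (-η * L - Real.log K) ≤ Real.exp ((T : ℝ) * η ^ 2 - η * R) := by
      rw [Real.exp_sub, Real.exp_log hKpos]
      calc Real.exp (-η * L) / K = (1 / K) * Real.exp (-η * L) := by ring
        _ ≤ _ := hkey
    exact Real.exp_le_exp.mp this
  have hregret : R - L ≤ Real.log K / η + (T : ℝ) * η := by
    have h := hkey2
    have h3 : R - L ≤ (Real.log K + (T : ℝ) * η ^ 2) / η := by
      rw [le_div_iff₀ hηpos]; nlinarith
    calc R - L ≤ (Real.log K + (T : ℝ) * η ^ 2) / η := h3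
      _ = Real.log K / η + (T : ℝ) * η := by field_simp
  have hηsq : η ^ 2 = Real.log K / T := by
    rw [hη, Real.sq_sqrt (by positivity)]
  have hfinal : Real.log K / η + (T : ℝ) * η = 2 * Real.sqrt ((T : ℝ) * Real.log K) := by
    have h1 : η * η = Real.log K / T := by rw [← sq]; exact hηsq
    have h2 : Real.log K = η * η * T := by rw [h1]; field_simp
    rw [h2]
    have : η * η * T / η + T * η = 2 * (η * T) := by field_simp; ring
    rw [this]
    have : Real.sqrt ((T : ℝ) * (η * η * T)) = η * T := by
      rw [show (T : ℝ) * (η * η * T) = (η * T) ^ 2 by ring]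
      exact Real.sqrt_sq (by positivity)
    rw [this]
  calc R - Finset.univ.inf' _ (fun i : Fin K => ∑ t ∈ Finset.Icc 1 T, z t i)
      = R - L := by rw [hL, hi0]
    _ ≤ Real.log K / η + (T : ℝ) * η := hregret
    _ = 2 * Real.sqrt ((T : ℝ) * Real.log K) := hfinal
end
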